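/- arXiv:1809.10401 — 3 statements merged into one kernel-verified Lean document; each statement's English description precedes it below -/
import Mathlib

section
/- Let H be a complex Hilbert space, P an orthogonal projection on H (P ∘ P = P, P† = P), and u an invertible bounded operator on H such that [P, u] and [P, u⁻¹] are compact operators. Define T := P ∘ u ∘ P + (I − P) and S := P ∘ u⁻¹ ∘ P + (I − P). Then T ∘ S − I and S ∘ T − I are compact operators on H. -/
/-- Key ring identity: if `p` is idempotent and `u * v = 1`, then the "Toeplitz" product
defect equals `p * u * [p, v] * p`. -/
lemma toeplitz_aux_ring {R : Type*} [Ring R] (p u v : R) (hp : p * p = p) (huv : u * v = 1) :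
    (p*u*p + (1-p)) * (p*v*p + (1-p)) - 1 = p * u * (p*v - v*p) * p := by
  have h1 : p * u * (p*v - v*p) * p = p*u*p*v*p - p*(u*v)*p := by
    simp only [mul_sub, sub_mul, mul_assoc, hp]
  rw [h1, huv, mul_one, hp]
  simp only [mul_add, add_mul, mul_sub, sub_mul, one_mul, mul_one, mul_assoc, hp]
  simp only [← mul_assoc, hp]
  abel

/-- Sandwiching a compact operator between bounded operators gives a compact operator. -/
lemma toeplitz_aux_compact {H : Type*} [NormedAddCommGroup H] [InnerProductSpace ℂ H]
    (A B C : H →L[ℂ] H) (hB : IsCompactOperator ⇑B) :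
    IsCompactOperator ⇑(A * B * C) := by
  have h := (hB.clm_comp A).comp_clm C
  simpa [Function.comp_def, ContinuousLinearMap.mul_apply] using h

/-- If `P` is an orthogonal projection and `u` is invertible with `[P, u]`, `[P, u⁻¹]` compact,
then `T := PuP + (I - P)` and `S := Pu⁻¹P + (I - P)` satisfy that `TS - I` and `ST - I`
are compact. -/
theorem toeplitz_stmt4 {H : Type*} [NormedAddCommGroup H] [InnerProductSpace ℂ H]
    [CompleteSpace H] (P u v : H →L[ℂ] H)
    (hP : P * P = P) (hPadj : ContinuousLinearMap.adjoint P = P)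
    (huv : u * v = 1) (hvu : v * u = 1)
    (hcu : IsCompactOperator ⇑(P * u - u * P))
    (hcv : IsCompactOperator ⇑(P * v - v * P))
    (T S : H →L[ℂ] H) (hT : T = P * u * P + (1 - P)) (hS : S = P * v * P + (1 - P)) :
    IsCompactOperator ⇑(T * S - 1) ∧ IsCompactOperator ⇑(S * T - 1) := by
  constructor
  · have key : T * S - 1 = P * u * (P * v - v * P) * P := by
      rw [hT, hS]; exact toeplitz_aux_ring P u v hP huv
    rw [key]
    exact toeplitz_aux_compact (P * u) (P * v - v * P) P hcv
  · have key : S * T - 1 = P * v * (P * u - u * P) * P := by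
      rw [hT, hS]; exact toeplitz_aux_ring P v u hP hvu
    rw [key]
    exact toeplitz_aux_compact (P * v) (P * u - u * P) P hcu
end

section
/- Let H be a complex Hilbert space, P an orthogonal projection on H (P ∘ P = P, P† = P), and u an invertible bounded operator on H such that [P, u] and [P, u⁻¹] are compact operators. Define T := P ∘ u ∘ P + (I − P). Then the kernel of T and the kernel of the adjoint T† are finite-dimensional subspaces of H, and the range of T is closed. -/
/-!
With `v = u⁻¹`, the operator `S := P v P + (1 - P)` inverts `T` modulo compact operators:
`S T - 1 = P v [P, u] P` and `T S - 1 = P u [P, v] P`. If `S T = 1 + K` with `K` compact, then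
`K x = -x` on `ker T`; if `T S = 1 + K'`, then `⟪y, K' y⟫ = -‖y‖²` on `ker T† = (range T)ᗮ`. In
both cases a compact operator is bounded below on a closed subspace, which is therefore
finite-dimensional. The range is closed because `T` is bounded below on `(ker T)ᗮ`: otherwise
unit vectors `xₙ ∈ (ker T)ᗮ` with `T xₙ → 0` converge, along a subsequence on which `K xₙ`
converges, to `S 0 - lim K xₙ`, a unit vector in `ker T ∩ (ker T)ᗮ = 0`.
-/

open Filter Topology NNReal ContinuousLinearMap

theorem FiniteDimensional.of_isCompactOperator_of_isClosedEmbedding {𝕜 E F : Type*}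
    [NontriviallyNormedField 𝕜] [CompleteSpace 𝕜] [AddCommGroup E] [Module 𝕜 E]
    [TopologicalSpace E] [T2Space E] [IsTopologicalAddGroup E] [ContinuousSMul 𝕜 E]
    [TopologicalSpace F] {f : E → F} (hf : IsCompactOperator f) (hf' : IsClosedEmbedding f) :
    FiniteDimensional 𝕜 E :=
  let ⟨_, hC, hCf⟩ := hf
  .of_isCompactOperator_id ⟨_, hf'.isCompact_preimage hC, hCf⟩

section Normed

variable {𝕜 E F : Type*} [NontriviallyNormedField 𝕜] [NormedAddCommGroup E] [NormedSpace 𝕜 E]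
  [NormedAddCommGroup F] [NormedSpace 𝕜 F]

theorem Submodule.finiteDimensional_of_norm_le_mul_norm_apply [CompleteSpace 𝕜]
    (V : Submodule 𝕜 E) [CompleteSpace V] {K : E →L[𝕜] F} (hK : IsCompactOperator K) (C : ℝ≥0)
    (hV : ∀ x ∈ V, ‖x‖ ≤ C * ‖K x‖) : FiniteDimensional 𝕜 V :=
  .of_isCompactOperator_of_isClosedEmbedding (hK.comp_clm V.subtypeL)
    (((K ∘L V.subtypeL).antilipschitz_of_bound fun x => hV x x.2).isClosedEmbedding
      (K ∘L V.subtypeL).uniformContinuous)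

theorem finiteDimensional_ker_of_isCompactOperator_comp_sub_id [CompleteSpace 𝕜]
    [CompleteSpace E] (T : E →L[𝕜] F) (S : F →L[𝕜] E)
    (hK : IsCompactOperator (S ∘L T - ContinuousLinearMap.id 𝕜 E)) :
    FiniteDimensional 𝕜 (LinearMap.ker (T : E →ₗ[𝕜] F)) := by
  refine (LinearMap.ker (T : E →ₗ[𝕜] F)).finiteDimensional_of_norm_le_mul_norm_apply hK 1
    fun x hx => ?_
  have hTx : T x = 0 := hx
  simp [hTx]

theorem exists_tendsto_subseq_of_tendsto_apply_zero (T : E →L[𝕜] F) (S : F →L[𝕜] E)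
    (hK : IsCompactOperator (S ∘L T - ContinuousLinearMap.id 𝕜 E)) {x : ℕ → E}
    (hx : ∀ n, ‖x n‖ ≤ 1) (hTx : Tendsto (T ∘ x) atTop (𝓝 0)) :
    ∃ y, ∃ φ : ℕ → ℕ, StrictMono φ ∧ Tendsto (x ∘ φ) atTop (𝓝 y) := by
  set K := S ∘L T - ContinuousLinearMap.id 𝕜 E
  obtain ⟨C, hC, hKC⟩ :=
    IsCompactOperator.image_closedBall_subset_compact (f := (K : E →ₗ[𝕜] E)) hK 1
  obtain ⟨z, -, φ, hφ, hz⟩ := hC.tendsto_subseq (x := K ∘ x) fun n =>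
    hKC ⟨x n, by simpa using hx n, rfl⟩
  have hx_eq : x ∘ φ = fun n => S (T (x (φ n))) - K (x (φ n)) := by ext; simp [K]
  refine ⟨-z, φ, hφ, hx_eq ▸ ?_⟩
  simpa using ((S.continuous.tendsto 0).comp (hTx.comp hφ.tendsto_atTop)).sub hz

end Normed

section RCLike

variable {𝕜 E F : Type*} [RCLike 𝕜] [NormedAddCommGroup E] [NormedAddCommGroup F]

theorem exists_norm_le_mul_norm_apply_of_disjoint_ker [NormedSpace 𝕜 E] [NormedSpace 𝕜 F]
    (T : E →L[𝕜] F) (S : F →L[𝕜] E)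
    (hK : IsCompactOperator (S ∘L T - ContinuousLinearMap.id 𝕜 E))
    {M : Submodule 𝕜 E} (hM : IsClosed (M : Set E)) (hMT : Disjoint M (LinearMap.ker (T : E →ₗ[𝕜] F))) :
    ∃ c : ℝ≥0, ∀ x ∈ M, ‖x‖ ≤ c * ‖T x‖ := by
  by_contra! h
  have hunit : ∀ n : ℕ, ∃ y ∈ M, ‖y‖ = 1 ∧ ‖T y‖ < 1 / (n + 1) := by
    intro n
    obtain ⟨x, hxM, hx⟩ := h (n + 1)
    have hx0 : x ≠ 0 := by rintro rfl; simp at hx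
    refine ⟨(‖x‖⁻¹ : 𝕜) • x, M.smul_mem _ hxM, norm_smul_inv_norm hx0, ?_⟩
    rw [map_smul, norm_smul, norm_inv, RCLike.norm_ofReal, abs_norm,
      inv_mul_lt_iff₀ (norm_pos_iff.2 hx0)]
    push_cast at hx
    rw [mul_one_div, lt_div_iff₀ (by positivity)]
    linarith
  choose y hyM hy1 hyT using hunit
  have hTy : Tendsto (T ∘ y) atTop (𝓝 0) :=
    squeeze_zero_norm (fun n => (hyT n).le) tendsto_one_div_add_atTop_nhds_zero_nat
  obtain ⟨z, φ, hφ, hz⟩ :=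
    exists_tendsto_subseq_of_tendsto_apply_zero T S hK (fun n => (hy1 n).le) hTy
  have hzM : z ∈ M := hM.mem_of_tendsto hz (Eventually.of_forall fun n => hyM (φ n))
  have hTz : T z = 0 :=
    tendsto_nhds_unique ((T.continuous.tendsto z).comp hz) (hTy.comp hφ.tendsto_atTop)
  have hz1 : ‖z‖ = 1 := tendsto_nhds_unique hz.norm (by simp [hy1])
  have hz0 : z = 0 := (Submodule.disjoint_def.1 hMT) z hzM hTz
  simp [hz0] at hz1

theorem isClosed_range_of_isCompactOperator_comp_sub_id [InnerProductSpace 𝕜 E] [CompleteSpace E]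
    [NormedSpace 𝕜 F] (T : E →L[𝕜] F) (S : F →L[𝕜] E)
    (hK : IsCompactOperator (S ∘L T - ContinuousLinearMap.id 𝕜 E)) :
    IsClosed (LinearMap.range (T : E →ₗ[𝕜] F) : Set F) := by
  set N := LinearMap.ker (T : E →ₗ[𝕜] F)
  obtain ⟨c, hc⟩ := exists_norm_le_mul_norm_apply_of_disjoint_ker T S hK N.isClosed_orthogonal
    N.orthogonal_disjoint.symm
  have hanti : AntilipschitzWith c (T ∘L Nᗮ.subtypeL) :=
    (T ∘L Nᗮ.subtypeL).antilipschitz_of_bound fun x => hc x x.2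
  have hrange : LinearMap.range (T : E →ₗ[𝕜] F) = Submodule.map (T : E →ₗ[𝕜] F) Nᗮ := by
    rw [LinearMap.range_eq_map, ← N.sup_orthogonal_of_hasOrthogonalProjection, Submodule.map_sup,
      LinearMap.le_ker_iff_map.1 le_rfl, bot_sup_eq]
  rw [hrange, Submodule.map_coe, ← Subtype.range_coe (s := (Nᗮ : Set E)), ← Set.range_comp]
  exact hanti.isClosed_range (T ∘L Nᗮ.subtypeL).uniformContinuous

theorem finiteDimensional_ker_adjoint_of_isCompactOperator_comp_sub_id [InnerProductSpace 𝕜 E]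
    [InnerProductSpace 𝕜 F] [CompleteSpace E] [CompleteSpace F] (T : E →L[𝕜] F) (S : F →L[𝕜] E)
    (hK : IsCompactOperator (T ∘L S - ContinuousLinearMap.id 𝕜 F)) :
    FiniteDimensional 𝕜 (LinearMap.ker (adjoint T : F →ₗ[𝕜] E)) := by
  refine (LinearMap.ker (adjoint T : F →ₗ[𝕜] E)).finiteDimensional_of_norm_le_mul_norm_apply hK 1
    fun y hy => ?_
  set K := T ∘L S - ContinuousLinearMap.id 𝕜 F
  have hTy : adjoint T y = 0 := hy
  have hinner : inner 𝕜 y (K y) = -inner 𝕜 y y := by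
    simp [K, inner_sub_right, ← adjoint_inner_left, hTy]
  have hsq : ‖y‖ * ‖y‖ ≤ ‖y‖ * ‖K y‖ := by
    calc ‖y‖ * ‖y‖ = ‖inner 𝕜 y (K y)‖ := by
          rw [hinner, norm_neg, ← inner_self_re_eq_norm, inner_self_eq_norm_mul_norm]
      _ ≤ ‖y‖ * ‖K y‖ := norm_inner_le_norm _ _
  rw [NNReal.coe_one, one_mul]
  nlinarith [norm_nonneg y, norm_nonneg (K y)]

end RCLike

theorem IsIdempotentElem.mul_sub_one_eq_mul_commutator_mul {R : Type*} [Ring R] {p u v : R}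
    (hp : IsIdempotentElem p) (hvu : v * u = 1) :
    (p * v * p + (1 - p)) * (p * u * p + (1 - p)) - 1 = p * v * (p * u - u * p) * p := by
  have hp' : ∀ x, p * (p * x) = p * x := fun x => by rw [← mul_assoc, hp.eq]
  have hvu' : ∀ x, v * (u * x) = x := fun x => by rw [← mul_assoc, hvu, one_mul]
  simp only [mul_sub, sub_mul, mul_add, add_mul, mul_one, one_mul, mul_assoc, hp', hvu', hp.eq]
  abel

theorem toeplitz_stmt5_general {H : Type*} [NormedAddCommGroup H] [InnerProductSpace ℂ H]
    [CompleteSpace H] (P u v : H →L[ℂ] H)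
    (hP : P * P = P)
    (huv : u * v = 1) (hvu : v * u = 1)
    (hcu : IsCompactOperator ⇑(P * u - u * P))
    (hcv : IsCompactOperator ⇑(P * v - v * P))
    (T : H →L[ℂ] H) (hT : T = P * u * P + (1 - P)) :
    FiniteDimensional ℂ (LinearMap.ker (T : H →ₗ[ℂ] H)) ∧
      FiniteDimensional ℂ (LinearMap.ker (ContinuousLinearMap.adjoint T : H →ₗ[ℂ] H)) ∧
      IsClosed (LinearMap.range (T : H →ₗ[ℂ] H) : Set H) := by
  set S : H →L[ℂ] H := P * v * P + (1 - P)
  have hST : IsCompactOperator ⇑(S * T - 1) := by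
    rw [hT, IsIdempotentElem.mul_sub_one_eq_mul_commutator_mul hP hvu]
    exact (hcu.comp_clm P).clm_comp (P * v)
  have hTS : IsCompactOperator ⇑(T * S - 1) := by
    rw [hT, IsIdempotentElem.mul_sub_one_eq_mul_commutator_mul hP huv]
    exact (hcv.comp_clm P).clm_comp (P * u)
  exact ⟨finiteDimensional_ker_of_isCompactOperator_comp_sub_id T S hST,
    finiteDimensional_ker_adjoint_of_isCompactOperator_comp_sub_id T S hTS,
    isClosed_range_of_isCompactOperator_comp_sub_id T S hST⟩

/-- If `P` is an orthogonal projection and `u` is invertible with `[P, u]`, `[P, u⁻¹]` compact,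
then `T := PuP + (I - P)` has finite-dimensional kernel, finite-dimensional kernel of the
adjoint, and closed range. -/
theorem toeplitz_stmt5 {H : Type*} [NormedAddCommGroup H] [InnerProductSpace ℂ H]
    [CompleteSpace H] (P u v : H →L[ℂ] H)
    (hP : P * P = P) (hPadj : ContinuousLinearMap.adjoint P = P)
    (huv : u * v = 1) (hvu : v * u = 1)
    (hcu : IsCompactOperator ⇑(P * u - u * P))
    (hcv : IsCompactOperator ⇑(P * v - v * P))
    (T : H →L[ℂ] H) (hT : T = P * u * P + (1 - P)) :
    FiniteDimensional ℂ (LinearMap.ker (T : H →ₗ[ℂ] H)) ∧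
      FiniteDimensional ℂ (LinearMap.ker (ContinuousLinearMap.adjoint T : H →ₗ[ℂ] H)) ∧
      IsClosed (LinearMap.range (T : H →ₗ[ℂ] H) : Set H) :=
  toeplitz_stmt5_general P u v hP huv hvu hcu hcv T hT
end

section
/- Let P be the Hardy projection on L²(𝕋) and let g : 𝕋 → ℂ be continuous with absolutely summable Fourier coefficients, i.e. the family (‖ĝ(n)‖)_{n ∈ ℤ} is summable. Then the commutator [P, M_g] = P ∘ M_g − M_g ∘ P is a compact operator on L²(𝕋). In particular this holds when g is smooth. -/
open MeasureTheory AddCircle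

instance : Fact (0 < 2 * Real.pi) := ⟨by positivity⟩

/-!
Multiplication by `fourier n` shifts Fourier coefficients by `n`, so the `m`-th coefficient of
`[P, M_{e_n}] f` vanishes unless `m` lies between `0` and `n`: each `[P, M_{e_n}]` has finite
rank. Since `ĝ` is summable, the Fourier series of `g` converges uniformly, and `h ↦ [P, M_h]` is
a bounded linear map out of `C(𝕋, ℂ)`; hence `[P, M_g]` is a norm limit of finite-rank operators,
and compact operators form a closed subspace.
-/

open ContinuousLinearMap

theorem isCompactOperator_of_forall_mem_finiteDimensional {𝕜 E F : Type*}
    [NontriviallyNormedField 𝕜] [LocallyCompactSpace 𝕜] [NormedAddCommGroup E] [NormedSpace 𝕜 E]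
    [NormedAddCommGroup F] [NormedSpace 𝕜 F] (A : E →L[𝕜] F) (V : Submodule 𝕜 F)
    [FiniteDimensional 𝕜 V] (hA : ∀ x, A x ∈ V) : IsCompactOperator A :=
  have : ProperSpace V := FiniteDimensional.proper 𝕜 V
  (isCompactOperator_of_locallyCompactSpace_dom (A.codRestrict V hA)).clm_comp V.subtypeL

section MulOp

variable {X : Type*} [TopologicalSpace X] [CompactSpace X] [MeasurableSpace X] [BorelSpace X]
  (μ : Measure X) [IsFiniteMeasure μ]

noncomputable def mulOp : C(X, ℂ) →L[ℂ] Lp ℂ 2 μ →L[ℂ] Lp ℂ 2 μ :=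
  ((mul ℂ ℂ).holderL μ ⊤ 2 2).comp (ContinuousMap.toLp ⊤ μ ℂ)

theorem coeFn_mulOp (h : C(X, ℂ)) (f : Lp ℂ 2 μ) :
    ⇑(mulOp μ h f) =ᵐ[μ] fun x => h x * f x := by
  filter_upwards [(mul ℂ ℂ).coeFn_holder (r := 2)
    (ContinuousMap.toLp ⊤ μ ℂ h) f, ContinuousMap.coeFn_toLp (p := ⊤) (𝕜 := ℂ) μ h]
    with x hx hh
  simp only [mulOp, coe_comp, Function.comp_apply, holderL_apply_apply, hx, hh, mul_apply']

end MulOp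

section Fourier

variable {T : ℝ} [Fact (0 < T)]

theorem fourierCoeff_sub (f g : Lp ℂ 2 (@haarAddCircle T _)) (m : ℤ) :
    fourierCoeff (⇑(f - g)) m = fourierCoeff f m - fourierCoeff g m := by
  simp only [← fourierBasis_repr, map_sub, lp.coeFn_sub, Pi.sub_apply]

theorem mem_span_fourierLp_of_fourierCoeff_eq_zero {s : Finset ℤ}
    {f : Lp ℂ 2 (@haarAddCircle T _)} (hf : ∀ n ∉ s, fourierCoeff f n = 0) :
    f ∈ Submodule.span ℂ (fourierLp 2 '' (s : Set ℤ)) := by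
  rw [(hasSum_fourier_series_L2 f).unique (hasSum_sum_of_ne_finset_zero fun n hn => by
    rw [hf n hn, zero_smul])]
  exact Submodule.sum_mem _ fun n hn =>
    Submodule.smul_mem _ _ (Submodule.subset_span (Set.mem_image_of_mem _ hn))

theorem fourierCoeff_mulOp_fourier (n : ℤ) (f : Lp ℂ 2 (@haarAddCircle T _)) (m : ℤ) :
    fourierCoeff (mulOp haarAddCircle (fourier (T := T) n) f) m = fourierCoeff f (m - n) := by
  refine integral_congr_ae ?_
  filter_upwards [coeFn_mulOp haarAddCircle (fourier n) f] with t ht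
  rw [smul_eq_mul, smul_eq_mul, ht, neg_sub, sub_eq_neg_add, fourier_add]
  ring

theorem isCompactOperator_of_fourierCoeff_eq_zero
    (A : Lp ℂ 2 (@haarAddCircle T _) →L[ℂ] Lp ℂ 2 (@haarAddCircle T _)) (s : Finset ℤ)
    (hA : ∀ f, ∀ n ∉ s, fourierCoeff (A f) n = 0) : IsCompactOperator A :=
  have := FiniteDimensional.span_of_finite ℂ (s.finite_toSet.image (fourierLp (T := T) 2))
  isCompactOperator_of_forall_mem_finiteDimensional A _ fun f =>
    mem_span_fourierLp_of_fourierCoeff_eq_zero (hA f)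

theorem fourierCoeff_commutator_mulOp_fourier
    {P : Lp ℂ 2 (@haarAddCircle T _) →L[ℂ] Lp ℂ 2 (@haarAddCircle T _)}
    (hP : ∀ f n, fourierCoeff (P f) n = if 0 ≤ n then fourierCoeff f n else 0)
    (n : ℤ) (f : Lp ℂ 2 (@haarAddCircle T _)) {m : ℤ} (hm : m ∉ Finset.Ico (min 0 n) (max 0 n)) :
    fourierCoeff (P (mulOp haarAddCircle (fourier n) f) - mulOp haarAddCircle (fourier n) (P f))
      m = 0 := by
  rw [fourierCoeff_sub, hP, fourierCoeff_mulOp_fourier, fourierCoeff_mulOp_fourier, hP]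
  have hsign : 0 ≤ m - n ↔ 0 ≤ m := by
    rw [Finset.mem_Ico, not_and_or, not_le, not_lt] at hm
    omega
  simp only [hsign, sub_self]

end Fourier

/-- For the Hardy projection `P` on `L²(𝕋)` and a continuous `g : 𝕋 → ℂ` whose Fourier
coefficients are absolutely summable, the commutator `[P, M_g] = P M_g - M_g P` with the
multiplication operator `M_g` is compact. (In particular this applies to smooth `g`.) -/
theorem toeplitz_stmt8
    (g : C(AddCircle (2 * Real.pi), ℂ))
    (hg : Summable fun n : ℤ => ‖fourierCoeff (⇑g) n‖)
    (P M : Lp ℂ 2 (haarAddCircle (T := 2 * Real.pi)) →L[ℂ]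
      Lp ℂ 2 (haarAddCircle (T := 2 * Real.pi)))
    (hP : ∀ (f : Lp ℂ 2 (haarAddCircle (T := 2 * Real.pi))) (n : ℤ),
      fourierCoeff (⇑(P f)) n = if 0 ≤ n then fourierCoeff (⇑f) n else 0)
    (hM : ∀ f : Lp ℂ 2 (haarAddCircle (T := 2 * Real.pi)),
      ⇑(M f) =ᵐ[haarAddCircle] fun t => g t * f t) :
    IsCompactOperator ⇑(P * M - M * P) := by
  obtain rfl : M = mulOp haarAddCircle g :=
    ext fun f => Lp.ext ((hM f).trans (coeFn_mulOp haarAddCircle g f).symm)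
  -- `mul ℂ _ P - (mul ℂ _).flip P` is `X ↦ P * X - X * P`
  have hsum := ((mul ℂ _ P - (mul ℂ _).flip P).comp (mulOp haarAddCircle)).hasSum
    (hasSum_fourier_series_of_summable hg.of_norm)
  simp only [coe_comp, Function.comp_apply, map_smul, sub_apply, mul_apply', flip_apply] at hsum
  refine isCompactOperator_of_tendsto hsum (.of_forall fun s => ?_)
  exact Submodule.sum_mem (compactOperator _ _ _) fun n _ =>
    Submodule.smul_mem _ _ (isCompactOperator_of_fourierCoeff_eq_zero _ _ fun f _ =>
      fourierCoeff_commutator_mulOp_fourier hP n f)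
end
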